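/- arXiv:0901.0695 — 2 statements merged into one kernel-verified Lean document; each statement's English description precedes it below -/
import Mathlib

section
/- For every ℘ > 0 there exists a metric space (X,d) such that (X,d) has strict p-negative type if and only if p ∈ [0,℘]. In particular, the supremal p-negative type of an infinite metric space can be strict. -/
open scoped BigOperators

/-- The kernel `d(x,y)^p`, with the convention that it vanishes on the diagonal
(this matters only when `p = 0`). -/
noncomputable def negKer {X : Type*} [MetricSpace X] (p : ℝ) (x y : X) : ℝ :=
  @ite ℝ (x = y) (Classical.dec _) 0 (dist x y ^ p)

/-- `(X,d)` has `p`-negative type: for all `k ≥ 2`, pairwise distinct points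
`x₁,…,x_k` and reals `η₁,…,η_k` summing to zero,
`∑_{i,j} d(xᵢ,xⱼ)^p ηᵢ ηⱼ ≤ 0`. -/
def HasNegType (X : Type*) [MetricSpace X] (p : ℝ) : Prop :=
  ∀ (k : ℕ), 2 ≤ k → ∀ (x : Fin k → X), Function.Injective x →
    ∀ (η : Fin k → ℝ), (∑ i, η i) = 0 →
      (∑ i, ∑ j, negKer p (x i) (x j) * η i * η j) ≤ 0

/-- `(X,d)` has strict `p`-negative type: `p`-negative type, with strict
inequality whenever `η ≠ 0`. -/
def HasStrictNegType (X : Type*) [MetricSpace X] (p : ℝ) : Prop :=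
  HasNegType X p ∧
  ∀ (k : ℕ), 2 ≤ k → ∀ (x : Fin k → X), Function.Injective x →
    ∀ (η : Fin k → ℝ), (∑ i, η i) = 0 → η ≠ 0 →
      (∑ i, ∑ j, negKer p (x i) (x j) * η i * η j) < 0

/-! With distance `c` inside each of two parts (`m` points, resp. countably many) and `1`
across, `d(x, y)^p = c^p + (1 - c^p) (s x - s y)²` off the diagonal, `s` the indicator of the
finite part. For weights `η` summing to `0` with total `A` on the finite part this turns the
quadratic form into `2 (c^p - 1) A² - c^p ∑ ηᵢ²`. Cauchy–Schwarz bounds `A²` by `m` times the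
squared mass on the finite part; the bound is approached, though never attained by a nonzero
`η`, by spreading `-A` thinly over the infinite part. So strict `p`-negative type holds iff
`c^p (2m - 1) ≤ 2m`, and otherwise `p`-negative type fails. Take `c^℘ = 2m / (2m - 1)`, with
`m` large enough that `c ≤ 2` (needed for the triangle inequality). -/

open Finset

lemma hasStrictNegType_of_forall_lt {X : Type*} [MetricSpace X] {p : ℝ}
    (h : ∀ (k : ℕ), 2 ≤ k → ∀ (x : Fin k → X), Function.Injective x →
      ∀ (η : Fin k → ℝ), (∑ i, η i) = 0 → η ≠ 0 →
        (∑ i, ∑ j, negKer p (x i) (x j) * η i * η j) < 0) :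
    HasStrictNegType X p := by
  refine ⟨fun k hk x hx η hη => ?_, h⟩
  rcases eq_or_ne η 0 with rfl | hne
  · simp
  · exact (h k hk x hx η hη hne).le

lemma HasNegType.sum_sum_le_zero {X : Type*} [MetricSpace X] {p : ℝ} (h : HasNegType X p)
    {ι : Type*} [Fintype ι] (hι : 2 ≤ Fintype.card ι) {x : ι → X} (hx : Function.Injective x)
    {η : ι → ℝ} (hη : ∑ i, η i = 0) :
    ∑ i, ∑ j, negKer p (x i) (x j) * η i * η j ≤ 0 := by
  set e := (Fintype.equivFin ι).symm
  have sum_sum_comp (F : ι → ι → ℝ) : ∑ i, ∑ j, F (e i) (e j) = ∑ i, ∑ j, F i j :=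
    (sum_congr rfl fun i _ => e.sum_comp (F (e i))).trans (e.sum_comp fun i => ∑ j, F i j)
  exact (sum_sum_comp fun i j => negKer p (x i) (x j) * η i * η j).symm.trans_le <|
    h _ hι (x ∘ e) (hx.comp e.injective) (η ∘ e) (by rwa [Function.comp_def, e.sum_comp])

lemma sum_sum_sub_sq_mul_mul {ι : Type*} [Fintype ι] (s η : ι → ℝ) (hη : ∑ i, η i = 0) :
    ∑ i, ∑ j, (s i - s j) ^ 2 * η i * η j = -2 * (∑ i, s i * η i) ^ 2 := by
  have expand : ∀ i j, (s i - s j) ^ 2 * η i * η j =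
      s i ^ 2 * η i * η j + s j ^ 2 * η j * η i - 2 * (s i * η i) * (s j * η j) := by
    intros; ring
  simp only [expand, sum_add_distrib, sum_sub_distrib, ← mul_sum, ← sum_mul, hη]
  ring

lemma sq_sum_mul_le_of_sq_eq_self {ι : Type*} [Fintype ι] {w : ι → ℝ}
    (hw : ∀ i, w i ^ 2 = w i) (η : ι → ℝ) :
    (∑ i, w i * η i) ^ 2 ≤ (∑ i, w i) * ∑ i, w i * η i ^ 2 := by
  simpa only [Pi.mul_apply, ← mul_assoc, ← sq, hw, mul_pow] using
    sum_mul_sq_le_sq_mul_sq univ w (w * η)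

/-- A type synonym, since `Fin m ⊕ ℕ` already carries the disjoint-union metric; `c` is the
distance inside each part in the instance below. -/
def TwoCluster (m : ℕ) (_c : ℝ) : Type := Fin m ⊕ ℕ

namespace TwoCluster

variable {m : ℕ} {c : ℝ}

instance : DecidableEq (TwoCluster m c) := inferInstanceAs (DecidableEq (Fin m ⊕ ℕ))

instance : Infinite (TwoCluster m c) := inferInstanceAs (Infinite (Fin m ⊕ ℕ))

noncomputable instance [Fact (1 ≤ c)] [Fact (c ≤ 2)] : MetricSpace (TwoCluster m c) where
  dist x y := if x = y then 0 else if Sum.isLeft x = Sum.isLeft y then c else 1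
  dist_self _ := if_pos rfl
  dist_comm x y := by simp only [eq_comm]
  dist_triangle x y z := by
    -- all nonzero distances lie in `[1, 2]`
    have h1 : 1 ≤ c := Fact.out
    have h2 : c ≤ 2 := Fact.out
    split_ifs <;> first | linarith | simp_all
  eq_of_dist_eq_zero {x y} h := by
    have h1 : 1 ≤ c := Fact.out
    by_contra hne
    simp only [if_neg hne] at h
    split_ifs at h <;> linarith

def side (x : TwoCluster m c) : ℝ := if Sum.isLeft x then 1 else 0

@[simp] lemma side_inl (a : Fin m) : side (c := c) (Sum.inl a) = 1 := rfl

@[simp] lemma side_inr (n : ℕ) : side (m := m) (c := c) (Sum.inr n) = 0 := rfl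

lemma side_nonneg (x : TwoCluster m c) : 0 ≤ side x := by
  unfold side; split_ifs <;> norm_num

lemma side_le_one (x : TwoCluster m c) : side x ≤ 1 := by
  unfold side; split_ifs <;> norm_num

lemma side_sq (x : TwoCluster m c) : side x ^ 2 = side x := by
  unfold side; split_ifs <;> norm_num

lemma one_sub_side_sq (x : TwoCluster m c) : (1 - side x) ^ 2 = 1 - side x := by
  unfold side; split_ifs <;> norm_num

lemma sum_side_le {ι : Type*} [Fintype ι] {x : ι → TwoCluster m c} (hx : Function.Injective x) :
    ∑ i, side (x i) ≤ m := by
  have h : Fintype.card {i // Sum.isLeft (x i)} ≤ m := by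
    simpa using Fintype.card_le_of_injective
      (fun i : {i // Sum.isLeft (x i)} => Sum.getLeft _ i.2) fun a b hab => Subtype.ext <| hx <| by
        rw [← Sum.inl_getLeft (x a) a.2, ← Sum.inl_getLeft (x b) b.2]
        exact congrArg Sum.inl hab
  rw [Fintype.card_subtype] at h
  simp only [side, sum_boole]
  exact_mod_cast h

lemma sq_sum_side_mul_le {ι : Type*} [Fintype ι] {x : ι → TwoCluster m c}
    (hx : Function.Injective x) (η : ι → ℝ) :
    (∑ i, side (x i) * η i) ^ 2 ≤ m * ∑ i, side (x i) * η i ^ 2 :=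
  (sq_sum_mul_le_of_sq_eq_self (fun i => side_sq (x i)) η).trans <| mul_le_mul_of_nonneg_right
    (sum_side_le hx) (sum_nonneg fun _ _ => mul_nonneg (side_nonneg _) (sq_nonneg _))

lemma sq_sum_side_mul_le_card_mul {ι : Type*} [Fintype ι] (x : ι → TwoCluster m c) {η : ι → ℝ}
    (hη : ∑ i, η i = 0) :
    (∑ i, side (x i) * η i) ^ 2 ≤ Fintype.card ι * ∑ i, (1 - side (x i)) * η i ^ 2 := by
  have hA : ∑ i, (1 - side (x i)) * η i = -∑ i, side (x i) * η i := by
    simp only [sub_mul, one_mul, sum_sub_distrib, hη, zero_sub]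
  calc (∑ i, side (x i) * η i) ^ 2 = (∑ i, (1 - side (x i)) * η i) ^ 2 := by rw [hA, neg_sq]
    _ ≤ (∑ i, (1 - side (x i))) * ∑ i, (1 - side (x i)) * η i ^ 2 :=
      sq_sum_mul_le_of_sq_eq_self (fun i => one_sub_side_sq (x i)) η
    _ ≤ Fintype.card ι * ∑ i, (1 - side (x i)) * η i ^ 2 := by
      refine mul_le_mul_of_nonneg_right ?_ <|
        sum_nonneg fun _ _ => mul_nonneg (sub_nonneg.2 (side_le_one _)) (sq_nonneg _)
      simpa using sum_le_sum fun i _ => sub_le_self 1 (side_nonneg (x i))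

variable [Fact (1 ≤ c)] [Fact (c ≤ 2)]

lemma negKer_eq (p : ℝ) (x y : TwoCluster m c) :
    negKer p x y = c ^ p + (1 - c ^ p) * (side x - side y) ^ 2 - if x = y then c ^ p else 0 := by
  unfold negKer
  split_ifs with h
  · simp [h]
  · change (if x = y then 0 else if Sum.isLeft x = Sum.isLeft y then c else 1) ^ p = _
    rcases x with a | a <;> rcases y with b | b <;> simp_all [side]

lemma sum_sum_negKer_mul_mul (p : ℝ) {ι : Type*} [Fintype ι] {x : ι → TwoCluster m c}
    (hx : Function.Injective x) {η : ι → ℝ} (hη : ∑ i, η i = 0) :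
    ∑ i, ∑ j, negKer p (x i) (x j) * η i * η j =
      2 * (c ^ p - 1) * (∑ i, side (x i) * η i) ^ 2 - c ^ p * ∑ i, η i ^ 2 := by
  classical
  have split_sides := sum_sum_sub_sq_mul_mul (fun i => side (x i)) η hη
  simp only [negKer_eq, hx.eq_iff, add_mul, sub_mul, sum_add_distrib, sum_sub_distrib,
    ite_mul, zero_mul, sum_ite_eq, mem_univ, if_true, mul_assoc, ← mul_sum, ← sum_mul]
    at split_sides ⊢
  rw [split_sides]
  simp only [← sq, hη]
  ring

lemma sum_sum_negKer_mul_mul_neg {p : ℝ} (hp : c ^ p * (2 * m - 1) ≤ 2 * m) {ι : Type*}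
    [Fintype ι] {x : ι → TwoCluster m c} (hx : Function.Injective x) {η : ι → ℝ}
    (hη : ∑ i, η i = 0) (hne : η ≠ 0) :
    ∑ i, ∑ j, negKer p (x i) (x j) * η i * η j < 0 := by
  rw [sum_sum_negKer_mul_mul p hx hη]
  have hcp : 0 < c ^ p := Real.rpow_pos_of_pos (by linarith [(Fact.out : 1 ≤ c)]) p
  set A := ∑ i, side (x i) * η i
  set TL := ∑ i, side (x i) * η i ^ 2
  set TR := ∑ i, (1 - side (x i)) * η i ^ 2
  have hTL : 0 ≤ TL := sum_nonneg fun _ _ => mul_nonneg (side_nonneg _) (sq_nonneg _)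
  have hTR : 0 ≤ TR :=
    sum_nonneg fun _ _ => mul_nonneg (sub_nonneg.2 (side_le_one _)) (sq_nonneg _)
  have hsplit : ∑ i, η i ^ 2 = TL + TR := by
    rw [← sum_add_distrib]
    exact sum_congr rfl fun i _ => by ring
  have hcoef : 2 * (c ^ p - 1) * A ^ 2 ≤ c ^ p * TL := by
    rcases le_or_gt (c ^ p) 1 with h | h
    · nlinarith [sq_nonneg A]
    · calc 2 * (c ^ p - 1) * A ^ 2 ≤ 2 * (c ^ p - 1) * (m * TL) := by
            gcongr; exact sq_sum_side_mul_le hx η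
        _ = (c ^ p + (c ^ p * (2 * m - 1) - 2 * m)) * TL := by ring
        _ ≤ c ^ p * TL := mul_le_mul_of_nonneg_right (by linarith) hTL
  rw [hsplit]
  rcases hTR.eq_or_lt with hTR0 | hTRpos
  · have hA : A ^ 2 ≤ Fintype.card ι * TR := sq_sum_side_mul_le_card_mul x hη
    rw [← hTR0, mul_zero] at hA
    obtain ⟨i, hi⟩ := Function.ne_iff.1 hne
    have hpos : 0 < ∑ i, η i ^ 2 :=
      sum_pos' (fun i _ => sq_nonneg _) ⟨i, mem_univ i, sq_pos_of_ne_zero hi⟩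
    rw [← hsplit]
    nlinarith [sq_nonneg A]
  · nlinarith [mul_pos hcp hTRpos]

lemma not_hasNegType {p : ℝ} (hp : 2 * m < c ^ p * (2 * m - 1)) :
    ¬ HasNegType (TwoCluster m c) p := by
  intro h
  have hcp : 0 < c ^ p := Real.rpow_pos_of_pos (by linarith [(Fact.out : 1 ≤ c)]) p
  have hm : (0 : ℝ) < m := by
    rcases Nat.eq_zero_or_pos m with rfl | hm
    · norm_num at hp; linarith
    · exact_mod_cast hm
  -- weight `1/m` on each finite point and `-1/n` on `n` points of the infinite part, where
  -- the form is `2 (c^p - 1) - c^p (1/m + 1/n)`, positive for `n` large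
  obtain ⟨n, hn⟩ := exists_nat_gt (c ^ p * m / (c ^ p * (2 * m - 1) - 2 * m))
  have hgap : 0 < c ^ p * (2 * m - 1) - 2 * m := sub_pos.2 hp
  have hn0 : (0 : ℝ) < n := lt_trans (by positivity) hn
  rw [div_lt_iff₀ hgap] at hn
  let x : Fin m ⊕ Fin n → TwoCluster m c := Sum.map id Fin.val
  have hx : Function.Injective x := Function.injective_id.sumMap Fin.val_injective
  let η : Fin m ⊕ Fin n → ℝ := Sum.elim (fun _ => (m : ℝ)⁻¹) (fun _ => -(n : ℝ)⁻¹)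
  have hη : ∑ i, η i = 0 := by simp [η, Fintype.sum_sum_type, hm.ne', hn0.ne']
  have hcard : 2 ≤ Fintype.card (Fin m ⊕ Fin n) := by
    simp only [Fintype.card_sum, Fintype.card_fin]
    have : 0 < m := by exact_mod_cast hm
    have : 0 < n := by exact_mod_cast hn0
    omega
  have hQ := h.sum_sum_le_zero hcard hx hη
  have hA : ∑ i, side (x i) * η i = 1 := by simp [x, η, Fintype.sum_sum_type, hm.ne']
  have hT : ∑ i, η i ^ 2 = (m : ℝ)⁻¹ + (n : ℝ)⁻¹ := by
    simp only [η, Fintype.sum_sum_type, Sum.elim_inl, Sum.elim_inr, neg_sq, sum_const, card_univ,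
      Fintype.card_fin, nsmul_eq_mul]
    field_simp
  rw [sum_sum_negKer_mul_mul p hx hη, hA, hT] at hQ
  field_simp at hQ
  nlinarith

theorem hasStrictNegType_iff {p : ℝ} :
    HasStrictNegType (TwoCluster m c) p ↔ c ^ p * (2 * m - 1) ≤ 2 * m :=
  ⟨fun h => not_lt.1 fun hp => not_hasNegType hp h.1,
    fun hp => hasStrictNegType_of_forall_lt fun _ _ _ hx _ hη hne =>
      sum_sum_negKer_mul_mul_neg hp hx hη hne⟩

end TwoCluster

lemma exists_nat_two_mul_div_le {a : ℝ} (ha : 1 < a) :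
    ∃ m : ℕ, (1 : ℝ) ≤ m ∧ 2 * m / (2 * m - 1 : ℝ) ≤ a := by
  obtain ⟨m, hm⟩ := exists_nat_gt (1 / (a - 1))
  have hm0 : (0 : ℝ) < m := lt_trans (one_div_pos.2 (sub_pos.2 ha)) hm
  have hm1 : (1 : ℝ) ≤ m := Nat.one_le_cast.2 (Nat.cast_pos.1 hm0)
  refine ⟨m, hm1, ?_⟩
  have h : 2 * m / (2 * m - 1 : ℝ) ≤ 1 + 1 / m := by
    rw [div_le_iff₀ (by linarith)]
    field_simp
    nlinarith
  linarith [(one_div_lt (sub_pos.2 ha) hm0).1 hm]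

lemma exists_one_lt_le_two_rpow_eq {℘ r : ℝ} (h℘ : 0 < ℘) (hr1 : 1 < r) (hr2 : r ≤ 2 ^ ℘) :
    ∃ c : ℝ, 1 < c ∧ c ≤ 2 ∧ c ^ ℘ = r := by
  refine ⟨r ^ ℘⁻¹, Real.one_lt_rpow hr1 (inv_pos.2 h℘), ?_, Real.rpow_inv_rpow (by linarith) h℘.ne'⟩
  calc r ^ ℘⁻¹ ≤ (2 ^ ℘) ^ ℘⁻¹ := Real.rpow_le_rpow (by linarith) hr2 (inv_nonneg.2 h℘.le)
    _ = 2 := Real.rpow_rpow_inv zero_le_two h℘.ne'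

/-- For every `℘ > 0` there is an (infinite) metric space having strict
`p`-negative type exactly for `p ∈ [0,℘]`; in particular the supremal
negative type of an infinite metric space can be strict. -/
theorem exists_metricSpace_strictNegType_Icc (℘ : ℝ) (h℘ : 0 < ℘) :
    ∃ (X : Type) (_ : MetricSpace X), Infinite X ∧
      ∀ p : ℝ, 0 ≤ p → (HasStrictNegType X p ↔ p ≤ ℘) := by
  obtain ⟨m, hm, hm℘⟩ := exists_nat_two_mul_div_le (Real.one_lt_rpow one_lt_two h℘)
  have hm1 : 1 < 2 * m / (2 * m - 1 : ℝ) := (one_lt_div (by linarith)).2 (by linarith)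
  obtain ⟨c, hc1, hc2, hc℘⟩ := exists_one_lt_le_two_rpow_eq h℘ hm1 hm℘
  have : Fact (1 ≤ c) := ⟨hc1.le⟩
  have : Fact (c ≤ 2) := ⟨hc2⟩
  refine ⟨TwoCluster m c, inferInstance, inferInstance, fun p _ => ?_⟩
  rw [TwoCluster.hasStrictNegType_iff, ← le_div_iff₀ (by linarith), ← hc℘,
    Real.rpow_le_rpow_left_iff hc1]
end

section
/- Let 1 ≤ p ≤ 2 and let μ be a positive measure. If a metric space (X,d) is isometric to a subset of L_p(μ) (real-valued L_p functions with the L_p norm distance), then (X,d) has strict q-negative type for all q ∈ [0,p). -/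
open scoped BigOperators

open MeasureTheory

open Matrix Set Real Filter
open scoped ENNReal

/-!
Put `A = d^p`; powers and exponentials of matrices below are entrywise. On `ℝ` the kernel
`(a - b)^2` is conditionally negative semidefinite, since `∑ ηᵢ ηⱼ (aᵢ - aⱼ)^2 = -2 (∑ ηᵢ aᵢ)^2`
when `∑ ηᵢ = 0`; by the subordination step below so is `|a - b|^p` for `p < 2`, and integrating
over `ω`, so is `A` on `L_p`. By Schoenberg's theorem `e^{-sA}` is then positive semidefinite for
every `s ≥ 0`. For `0 < α < 1` the identity `C_α t^α = ∫₀^∞ (1 - e^{-ts}) s^{-1-α} ds` gives,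
for `∑ ηᵢ = 0`, `C_α ηᵀ A^α η = -∫₀^∞ ηᵀ e^{-sA} η s^{-1-α} ds ≤ 0`. For distinct points
`e^{-sA} → I` as `s → ∞`, so the integrand is eventually positive when `η ≠ 0` and the
inequality is strict. Take `α = q/p`; the case `q = 0` is direct.
-/

theorem setIntegral_Ioi_pos_of_eventually_pos {f : ℝ → ℝ} {a : ℝ}
    (hf : IntegrableOn f (Ioi a)) (hnn : ∀ s ∈ Ioi a, 0 ≤ f s)
    (hpos : ∀ᶠ s in atTop, 0 < f s) : 0 < ∫ s in Ioi a, f s := by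
  rw [setIntegral_pos_iff_support_of_nonneg_ae
    ((ae_restrict_iff' measurableSet_Ioi).mpr (.of_forall hnn)) hf]
  obtain ⟨S, hS⟩ := eventually_atTop.mp hpos
  calc (0 : ℝ≥0∞) < volume (Ioi (max S a)) := by simp
    _ ≤ volume (Function.support f ∩ Ioi a) := measure_mono fun s hs =>
      ⟨(hS s (le_max_left S a |>.trans hs.le)).ne', (le_max_right S a).trans_lt hs⟩

section

variable {α : ℝ}

theorem integrableOn_one_sub_exp_neg_mul_mul_rpow (hα0 : 0 < α) (hα1 : α < 1) {r : ℝ}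
    (hr : 0 ≤ r) : IntegrableOn (fun s => (1 - exp (-(r * s))) * s ^ (-1 - α)) (Ioi 0) := by
  have hmeas : AEStronglyMeasurable (fun s : ℝ => (1 - exp (-(r * s))) * s ^ (-1 - α)) :=
    Measurable.aestronglyMeasurable (by fun_prop)
  have hbound : ∀ s : ℝ, 0 < s →
      0 ≤ 1 - exp (-(r * s)) ∧ 1 - exp (-(r * s)) ≤ min (r * s) 1 :=
    fun s hs => ⟨by nlinarith [exp_le_one_iff.mpr (by nlinarith : -(r * s) ≤ 0)],
      le_min (by linarith [add_one_le_exp (-(r * s))]) (by linarith [exp_pos (-(r * s))])⟩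
  rw [← Ioc_union_Ioi_eq_Ioi zero_le_one]
  refine IntegrableOn.union ?_ ?_
  · refine Integrable.mono' (((intervalIntegral.intervalIntegrable_rpow' (r := -α)
      (by linarith)).1).const_mul r) hmeas.restrict ?_
    filter_upwards [ae_restrict_mem measurableSet_Ioc] with s hs
    have hs0 : 0 < s := hs.1
    obtain ⟨h0, h1⟩ := hbound s hs0
    rw [norm_mul, Real.norm_of_nonneg h0, Real.norm_of_nonneg (rpow_nonneg hs0.le _),
      show -α = 1 + (-1 - α) by ring, rpow_add hs0, rpow_one, ← mul_assoc]
    exact mul_le_mul_of_nonneg_right (h1.trans (min_le_left _ _)) (rpow_nonneg hs0.le _)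
  · refine Integrable.mono' (integrableOn_Ioi_rpow_of_lt (by linarith : -1 - α < -1) one_pos)
      hmeas.restrict ?_
    filter_upwards [ae_restrict_mem measurableSet_Ioi] with s (hs : 1 < s)
    obtain ⟨h0, h1⟩ := hbound s (by linarith)
    rw [norm_mul, Real.norm_of_nonneg h0, Real.norm_of_nonneg (rpow_nonneg (by linarith) _)]
    exact mul_le_of_le_one_left (rpow_nonneg (by linarith) _) (h1.trans (min_le_right _ _))

theorem integral_one_sub_exp_neg_mul_mul_rpow (hα0 : 0 < α) {r : ℝ} (hr : 0 ≤ r) :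
    ∫ s in Ioi 0, (1 - exp (-(r * s))) * s ^ (-1 - α)
      = r ^ α * ∫ s in Ioi 0, (1 - exp (-s)) * s ^ (-1 - α) := by
  rcases hr.eq_or_lt with rfl | hr
  · simp [zero_rpow hα0.ne']
  have hscale := integral_comp_mul_left_Ioi (fun s => (1 - exp (-s)) * s ^ (-1 - α)) 0 hr
  rw [mul_zero, smul_eq_mul] at hscale
  have hcongr : ∫ s in Ioi 0, (1 - exp (-(r * s))) * (r * s) ^ (-1 - α)
      = r ^ (-1 - α) * ∫ s in Ioi 0, (1 - exp (-(r * s))) * s ^ (-1 - α) := by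
    rw [← integral_const_mul]
    refine setIntegral_congr_fun measurableSet_Ioi fun s (hs : 0 < s) => ?_
    rw [mul_rpow hr.le hs.le]
    ring
  rw [hcongr] at hscale
  have hr' : r ^ (-1 - α) ≠ 0 := (rpow_pos_of_pos hr _).ne'
  rw [← mul_right_inj' hr', hscale, ← mul_assoc, ← rpow_add hr, sub_add_cancel, rpow_neg_one]

theorem integral_one_sub_exp_neg_mul_rpow_pos (hα0 : 0 < α) (hα1 : α < 1) :
    0 < ∫ s in Ioi 0, (1 - exp (-s)) * s ^ (-1 - α) := by
  refine setIntegral_Ioi_pos_of_eventually_pos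
    (by simpa using integrableOn_one_sub_exp_neg_mul_mul_rpow hα0 hα1 zero_le_one)
    (fun s (hs : 0 < s) => ?_) ?_
  · exact mul_nonneg (by linarith [exp_le_one_iff.mpr (neg_nonpos.mpr hs.le)])
      (rpow_nonneg hs.le _)
  · filter_upwards [eventually_gt_atTop 0] with s hs
    exact mul_pos (by linarith [exp_lt_one_iff.mpr (neg_lt_zero.mpr hs)]) (rpow_pos_of_pos hs _)

end

namespace Matrix
variable {ι : Type*} [Fintype ι]

def CondNegSemidef (A : Matrix ι ι ℝ) : Prop :=
  ∀ η : ι → ℝ, ∑ i, η i = 0 → η ⬝ᵥ A *ᵥ η ≤ 0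

theorem dotProduct_mulVec_self_eq_sum (A : Matrix ι ι ℝ) (x : ι → ℝ) :
    x ⬝ᵥ A *ᵥ x = ∑ i, ∑ j, x i * x j * A i j := by
  simp only [dotProduct, mulVec, Finset.mul_sum]
  exact Finset.sum_congr rfl fun i _ => Finset.sum_congr rfl fun j _ => by ring

theorem PosSemidef.map_pow {A : Matrix ι ι ℝ} (hA : A.PosSemidef) (n : ℕ) :
    (A.map (· ^ n)).PosSemidef := by
  induction n with
  | zero =>
    convert posSemidef_vecMulVec_self_star (1 : ι → ℝ) using 1
    ext; simp [vecMulVec]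
  | succ n ih =>
    rw [show A.map (· ^ (n + 1)) = A.map (· ^ n) ⊙ A by ext; simp [pow_succ]]
    exact ih.hadamard hA

theorem PosSemidef.map_exp {A : Matrix ι ι ℝ} (hA : A.PosSemidef) :
    (A.map exp).PosSemidef := by
  refine .of_dotProduct_mulVec_nonneg (hA.isHermitian.map _ fun _ => rfl) fun x => ?_
  have hsum : HasSum (fun n : ℕ => x ⬝ᵥ A.map (· ^ n) *ᵥ x / n.factorial)
      (x ⬝ᵥ A.map exp *ᵥ x) := by
    simp only [dotProduct_mulVec_self_eq_sum, Finset.sum_div, map_apply, mul_div_assoc]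
    refine hasSum_sum fun i _ => hasSum_sum fun j _ => HasSum.mul_left _ ?_
    simpa only [Real.exp_eq_exp_ℝ] using NormedSpace.expSeries_div_hasSum_exp (A i j)
  simpa using hsum.nonneg fun n =>
    div_nonneg (by simpa using (hA.map_pow n).dotProduct_mulVec_nonneg x) (by positivity)

theorem CondNegSemidef.posSemidef_map_exp_neg {A : Matrix ι ι ℝ} (hA : A.CondNegSemidef)
    (hAs : A.IsSymm) : (A.map fun t => exp (-t)).PosSemidef := by
  classical
  rcases isEmpty_or_nonempty ι with hι | ⟨⟨o⟩⟩
  · exact .of_dotProduct_mulVec_nonneg (by ext i; exact isEmptyElim i) fun x => by simp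
  -- `H` is the form of `-A` composed with the projection `ζ ↦ ζ - (∑ ζ) • eₒ` onto the
  -- zero-sum vectors, and `exp (-A)` is `exp H` up to a diagonal congruence
  set H : Matrix ι ι ℝ :=
    vecMulVec (A.col o) 1 + vecMulVec 1 (A o) - A - A o o • vecMulVec 1 1
  have hH : H.PosSemidef := by
    refine .of_dotProduct_mulVec_nonneg ?_ fun ζ => ?_
    · ext i j
      simp [H, vecMulVec, hAs.apply]
      ring
    set η := ζ - (∑ i, ζ i) • Pi.single o 1
    have hη : ∑ i, η i = 0 := by simp [η, Finset.sum_sub_distrib, Pi.single_apply]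
    have hHη : ζ ⬝ᵥ H *ᵥ ζ = -(η ⬝ᵥ A *ᵥ η) := by
      simp only [H, η, add_mulVec, sub_mulVec, smul_mulVec, vecMulVec_mulVec, mulVec_sub,
        mulVec_smul, add_dotProduct, dotProduct_sub, sub_dotProduct, dotProduct_smul,
        smul_dotProduct, mulVec_single_one, single_one_dotProduct, one_dotProduct,
        op_smul_eq_smul, smul_eq_mul, col_apply, mulVec, dotProduct_comm ζ]
      ring
    simpa [hHη] using hA η hη
  set v : ι → ℝ := fun i => exp (-A i o)
  have hexp : A.map (fun t => exp (-t))
      = exp (A o o) • (diagonal v * H.map exp * diagonal v) := by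
    ext i j
    simp only [map_apply, smul_apply, mul_diagonal, diagonal_mul, H, v, smul_eq_mul,
      ← Real.exp_add, hAs.apply o j]
    simp [vecMulVec]
    ring
  rw [hexp]
  simpa using (hH.map_exp.conjTranspose_mul_mul_same (diagonal v)).smul (Real.exp_pos (A o o)).le

theorem CondNegSemidef.posSemidef_map_exp_neg_mul {A : Matrix ι ι ℝ} (hA : A.CondNegSemidef)
    (hAs : A.IsSymm) {s : ℝ} (hs : 0 ≤ s) :
    (A.map fun t => exp (-(t * s))).PosSemidef := by
  have hsA : (s • A).CondNegSemidef := fun η hη => by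
    simpa [smul_mulVec, dotProduct_smul] using mul_nonpos_of_nonneg_of_nonpos hs (hA η hη)
  convert hsA.posSemidef_map_exp_neg (hAs.smul s) using 1
  ext i j
  simp [mul_comm]

section

variable {Ω : Type*} [MeasurableSpace Ω] {μ : Measure Ω} {M : Ω → Matrix ι ι ℝ}

theorem integrable_dotProduct_mulVec (hM : ∀ i j, Integrable (fun ω => M ω i j) μ)
    (x : ι → ℝ) :
    Integrable (fun ω => x ⬝ᵥ M ω *ᵥ x) μ := by
  simp only [dotProduct_mulVec_self_eq_sum]
  exact integrable_finsetSum _ fun i _ =>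
    integrable_finsetSum _ fun j _ => (hM i j).const_mul _

theorem integral_dotProduct_mulVec (hM : ∀ i j, Integrable (fun ω => M ω i j) μ)
    (x : ι → ℝ) :
    ∫ ω, x ⬝ᵥ M ω *ᵥ x ∂μ =
      x ⬝ᵥ (of fun i j => ∫ ω, M ω i j ∂μ) *ᵥ x := by
  simp only [dotProduct_mulVec_self_eq_sum, of_apply]
  rw [integral_finsetSum _ fun i _ =>
    integrable_finsetSum _ fun j _ => (hM i j).const_mul _]
  refine Finset.sum_congr rfl fun i _ => ?_
  rw [integral_finsetSum _ fun j _ => (hM i j).const_mul _]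
  exact Finset.sum_congr rfl fun j _ => integral_const_mul _ _

end

section

variable {α : ℝ}

theorem dotProduct_map_exp_neg_mul_mulVec_mul_eq (A : Matrix ι ι ℝ) {η : ι → ℝ}
    (hη : ∑ i, η i = 0) (s w : ℝ) :
    η ⬝ᵥ A.map (fun t => exp (-(t * s))) *ᵥ η * w
      = -(η ⬝ᵥ (of fun i j => (1 - exp (-(A i j * s))) * w) *ᵥ η) := by
  have hsplit : (of fun i j => (1 - exp (-(A i j * s))) * w)
      = w • (vecMulVec 1 1 - A.map fun t => exp (-(t * s))) := by
    ext i j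
    simp [vecMulVec]
    ring
  simp only [hsplit, smul_mulVec, sub_mulVec, vecMulVec_mulVec, dotProduct_smul, dotProduct_sub,
    dotProduct_one, one_dotProduct, hη, op_smul_eq_smul, smul_eq_mul]
  ring

theorem integrableOn_dotProduct_map_exp_neg_mul_mulVec_mul_rpow (hα0 : 0 < α) (hα1 : α < 1)
    {A : Matrix ι ι ℝ} (hA0 : ∀ i j, 0 ≤ A i j) {η : ι → ℝ} (hη : ∑ i, η i = 0) :
    IntegrableOn (fun s => η ⬝ᵥ A.map (fun t => exp (-(t * s))) *ᵥ η * s ^ (-1 - α))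
      (Ioi 0) := by
  simp only [dotProduct_map_exp_neg_mul_mulVec_mul_eq A hη]
  exact (integrable_dotProduct_mulVec (fun i j =>
    integrableOn_one_sub_exp_neg_mul_mul_rpow hα0 hα1 (hA0 i j)) η).neg

theorem integral_mul_dotProduct_map_rpow_mulVec (hα0 : 0 < α) (hα1 : α < 1)
    {A : Matrix ι ι ℝ} (hA0 : ∀ i j, 0 ≤ A i j) {η : ι → ℝ} (hη : ∑ i, η i = 0) :
    (∫ s in Ioi 0, (1 - exp (-s)) * s ^ (-1 - α)) * (η ⬝ᵥ A.map (· ^ α) *ᵥ η)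
      = -∫ s in Ioi 0, η ⬝ᵥ A.map (fun t => exp (-(t * s))) *ᵥ η * s ^ (-1 - α) := by
  simp only [dotProduct_map_exp_neg_mul_mulVec_mul_eq A hη, integral_neg, neg_neg]
  rw [integral_dotProduct_mulVec
    (M := fun s => of fun i j => (1 - exp (-(A i j * s))) * s ^ (-1 - α))
    fun i j => integrableOn_one_sub_exp_neg_mul_mul_rpow hα0 hα1 (hA0 i j)]
  simp only [of_apply, integral_one_sub_exp_neg_mul_mul_rpow hα0 (hA0 _ _)]
  rw [← smul_eq_mul, ← dotProduct_smul, ← smul_mulVec]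
  congr 2
  ext i j
  simp [mul_comm]

theorem CondNegSemidef.map_rpow {A : Matrix ι ι ℝ} (hA : A.CondNegSemidef) (hAs : A.IsSymm)
    (hA0 : ∀ i j, 0 ≤ A i j) (hα0 : 0 < α) (hα1 : α < 1) :
    (A.map (· ^ α)).CondNegSemidef := by
  intro η hη
  have hC := integral_one_sub_exp_neg_mul_rpow_pos hα0 hα1
  have hI :
      0 ≤ ∫ s in Ioi 0, η ⬝ᵥ A.map (fun t => exp (-(t * s))) *ᵥ η * s ^ (-1 - α) :=
    setIntegral_nonneg measurableSet_Ioi fun s (hs : 0 < s) => mul_nonneg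
      (by simpa using (hA.posSemidef_map_exp_neg_mul hAs hs.le).dotProduct_mulVec_nonneg η)
      (rpow_nonneg hs.le _)
  nlinarith [integral_mul_dotProduct_map_rpow_mulVec hα0 hα1 hA0 hη]

theorem CondNegSemidef.dotProduct_map_rpow_mulVec_neg {A : Matrix ι ι ℝ}
    (hA : A.CondNegSemidef) (hAs : A.IsSymm) (hdiag : ∀ i, A i i = 0)
    (hoff : ∀ i j, i ≠ j → 0 < A i j) (hα0 : 0 < α) (hα1 : α < 1) {η : ι → ℝ}
    (hη : ∑ i, η i = 0) (hne : η ≠ 0) : η ⬝ᵥ A.map (· ^ α) *ᵥ η < 0 := by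
  classical
  have hA0 : ∀ i j, 0 ≤ A i j := fun i j => by
    rcases eq_or_ne i j with rfl | h
    exacts [(hdiag i).ge, (hoff i j h).le]
  have hlim : Tendsto (fun s => η ⬝ᵥ A.map (fun t => exp (-(t * s))) *ᵥ η) atTop
      (nhds (η ⬝ᵥ (1 : Matrix ι ι ℝ) *ᵥ η)) := by
    simp only [dotProduct_mulVec_self_eq_sum]
    refine tendsto_finsetSum _ fun i _ => tendsto_finsetSum _ fun j _ => ?_
    refine Tendsto.const_mul _ ?_
    rcases eq_or_ne i j with rfl | h
    · simp [hdiag]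
    · simp only [map_apply, one_apply_ne h]
      exact tendsto_exp_atBot.comp
        (tendsto_neg_atTop_atBot.comp (tendsto_id.const_mul_atTop (hoff i j h)))
  have hpos : 0 < η ⬝ᵥ (1 : Matrix ι ι ℝ) *ᵥ η := by
    simpa using dotProduct_self_star_pos_iff.mpr hne
  have hI :
      0 < ∫ s in Ioi 0, η ⬝ᵥ A.map (fun t => exp (-(t * s))) *ᵥ η * s ^ (-1 - α) := by
    refine setIntegral_Ioi_pos_of_eventually_pos
      (integrableOn_dotProduct_map_exp_neg_mul_mulVec_mul_rpow hα0 hα1 hA0 hη)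
      (fun s (hs : 0 < s) => mul_nonneg ?_ (rpow_nonneg hs.le _)) ?_
    · simpa using (hA.posSemidef_map_exp_neg_mul hAs hs.le).dotProduct_mulVec_nonneg η
    · filter_upwards [hlim.eventually (lt_mem_nhds hpos), eventually_gt_atTop 0] with s hQ hs
      exact mul_pos hQ (rpow_pos_of_pos hs _)
  nlinarith [integral_mul_dotProduct_map_rpow_mulVec hα0 hα1 hA0 hη,
    integral_one_sub_exp_neg_mul_rpow_pos hα0 hα1]

end

theorem condNegSemidef_sub_sq (a : ι → ℝ) :
    (of fun i j => (a i - a j) ^ 2).CondNegSemidef := by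
  intro η hη
  have hsplit : (of fun i j => (a i - a j) ^ 2)
      = vecMulVec (a ^ 2) 1 + vecMulVec 1 (a ^ 2) - (2 : ℝ) • vecMulVec a a := by
    ext i j
    simp [vecMulVec]
    ring
  simp only [hsplit, add_mulVec, sub_mulVec, smul_mulVec, vecMulVec_mulVec, dotProduct_add,
    dotProduct_sub, dotProduct_smul, dotProduct_one, one_dotProduct, hη, op_smul_eq_smul,
    smul_eq_mul, dotProduct_comm a η]
  nlinarith [sq_nonneg (η ⬝ᵥ a)]

theorem condNegSemidef_abs_sub_rpow (a : ι → ℝ) {p : ℝ} (hp0 : 0 < p) (hp2 : p ≤ 2) :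
    (of fun i j => |a i - a j| ^ p).CondNegSemidef := by
  rcases hp2.eq_or_lt with rfl | hp2
  · simpa [rpow_two] using condNegSemidef_sub_sq a
  convert (condNegSemidef_sub_sq a).map_rpow (IsSymm.ext fun i j => by simp only [of_apply]; ring)
    (fun i j => sq_nonneg _) (half_pos hp0) (by linarith) using 1
  ext i j
  rw [of_apply, map_apply, of_apply, ← sq_abs, ← rpow_two, ← rpow_mul (abs_nonneg _)]
  congr 1
  ring

end Matrix

section

variable {X : Type*} [MetricSpace X]

theorem negKer_eq_dist_rpow {p : ℝ} (hp : p ≠ 0) (x y : X) : negKer p x y = dist x y ^ p := by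
  unfold negKer
  split_ifs with h
  · simp [h, zero_rpow hp]
  · rfl

theorem sum_negKer_mul_mul_eq_dotProduct {p : ℝ} (hp : p ≠ 0) {k : ℕ} (x : Fin k → X)
    (η : Fin k → ℝ) : ∑ i, ∑ j, negKer p (x i) (x j) * η i * η j
      = η ⬝ᵥ (of fun i j => dist (x i) (x j) ^ p) *ᵥ η := by
  simp only [dotProduct_mulVec_self_eq_sum, of_apply, negKer_eq_dist_rpow hp]
  exact Finset.sum_congr rfl fun i _ => Finset.sum_congr rfl fun j _ => by ring

theorem hasNegType_iff {p : ℝ} (hp : p ≠ 0) :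
    HasNegType X p ↔ ∀ k, 2 ≤ k → ∀ x : Fin k → X, Function.Injective x →
      (of fun i j => dist (x i) (x j) ^ p).CondNegSemidef := by
  simp only [HasNegType, CondNegSemidef, sum_negKer_mul_mul_eq_dotProduct hp]

theorem sum_negKer_zero_mul_mul {k : ℕ} {x : Fin k → X} (hx : Function.Injective x)
    (η : Fin k → ℝ) :
    ∑ i, ∑ j, negKer 0 (x i) (x j) * η i * η j = (∑ i, η i) ^ 2 - ∑ i, η i ^ 2 := by
  have hker : ∀ i j, negKer 0 (x i) (x j) * η i * η j
      = η i * η j - if i = j then η i * η j else 0 := fun i j => by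
    by_cases h : i = j <;> simp [negKer, hx.eq_iff, h]
  simp [hker, Finset.sum_sub_distrib, ← Finset.mul_sum, ← Finset.sum_mul, sq]

theorem hasStrictNegType_of_sum_neg {q : ℝ}
    (h : ∀ k, 2 ≤ k → ∀ x : Fin k → X, Function.Injective x → ∀ η : Fin k → ℝ,
      ∑ i, η i = 0 → η ≠ 0 → ∑ i, ∑ j, negKer q (x i) (x j) * η i * η j < 0) :
    HasStrictNegType X q := by
  refine ⟨fun k hk x hx η hη => ?_, h⟩
  rcases eq_or_ne η 0 with rfl | hne
  · simp
  · exact (h k hk x hx η hη hne).le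

theorem Isometry.negKer_eq {Y : Type*} [MetricSpace Y] {f : X → Y} (hf : Isometry f) (p : ℝ)
    (a b : X) : negKer p (f a) (f b) = negKer p a b := by
  unfold negKer
  by_cases h : a = b
  · simp [h]
  · rw [if_neg (hf.injective.ne h), if_neg h, hf.dist_eq]

theorem Isometry.hasNegType {Y : Type*} [MetricSpace Y] {f : X → Y} (hf : Isometry f) {p : ℝ}
    (h : HasNegType Y p) : HasNegType X p := by
  intro k hk x hx η hη
  simpa only [Function.comp_apply, hf.negKer_eq] using
    h k hk (f ∘ x) (hf.injective.comp hx) η hη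

theorem HasNegType.hasStrictNegType {p q : ℝ} (h : HasNegType X p) (hp : 0 < p) (hq0 : 0 ≤ q)
    (hqp : q < p) : HasStrictNegType X q := by
  refine hasStrictNegType_of_sum_neg fun k hk x hx η hη hne => ?_
  rcases hq0.eq_or_lt with rfl | hq0
  · have hη2 : 0 < ∑ i, η i ^ 2 := by
      simpa [dotProduct, sq] using dotProduct_self_star_pos_iff.mpr hne
    rw [sum_negKer_zero_mul_mul hx, hη]
    linarith
  set A : Matrix (Fin k) (Fin k) ℝ := of fun i j => dist (x i) (x j) ^ p
  have hA : A.map (· ^ (q / p)) = of fun i j => dist (x i) (x j) ^ q := by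
    ext i j
    simp only [A, map_apply, of_apply, ← rpow_mul dist_nonneg, mul_div_cancel₀ q hp.ne']
  rw [sum_negKer_mul_mul_eq_dotProduct hq0.ne', ← hA]
  refine ((hasNegType_iff hp.ne').mp h k hk x hx).dotProduct_map_rpow_mulVec_neg
    (IsSymm.ext fun i j => by simp [dist_comm]) (fun i => by simp [zero_rpow hp.ne'])
    (fun i j hij => rpow_pos_of_pos (dist_pos.mpr (hx.ne hij)) p) (div_pos hq0 hp)
    ((div_lt_one hp).mpr hqp) hη hne

end

section

variable {ι : Type*} [Fintype ι] {Ω : Type*} [MeasurableSpace Ω] {μ : Measure Ω}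
  {P : ℝ≥0∞} [Fact (1 ≤ P)]

theorem MeasureTheory.Lp.integrable_abs_sub_rpow (hP : P ≠ ∞) (u v : Lp ℝ P μ) :
    Integrable (fun ω => |u ω - v ω| ^ P.toReal) μ := by
  refine ((Lp.memLp (u - v)).integrable_norm_rpow
    (zero_lt_one.trans_le Fact.out).ne' hP).congr ?_
  filter_upwards [Lp.coeFn_sub u v] with ω hω
  rw [hω, Pi.sub_apply, Real.norm_eq_abs]

theorem MeasureTheory.Lp.dist_rpow_eq_integral (hP : P ≠ ∞) (u v : Lp ℝ P μ) :
    dist u v ^ P.toReal = ∫ ω, |u ω - v ω| ^ P.toReal ∂μ := by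
  have hP0 : 0 < P.toReal := ENNReal.toReal_pos (zero_lt_one.trans_le Fact.out).ne' hP
  have hint : 0 ≤ ∫ ω, ‖(u - v) ω‖ ^ P.toReal ∂μ :=
    integral_nonneg fun ω => by positivity
  rw [_root_.dist_eq_norm, Lp.norm_def,
    (Lp.memLp (u - v)).eLpNorm_eq_integral_rpow_norm (zero_lt_one.trans_le Fact.out).ne' hP,
    ENNReal.toReal_ofReal (by positivity), ← rpow_mul hint, inv_mul_cancel₀ hP0.ne', rpow_one]
  refine integral_congr_ae ?_
  filter_upwards [Lp.coeFn_sub u v] with ω hω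
  rw [hω, Pi.sub_apply, Real.norm_eq_abs]

theorem Matrix.condNegSemidef_dist_rpow_Lp (hP : P ≠ ∞) (hP2 : P.toReal ≤ 2)
    (y : ι → Lp ℝ P μ) : (of fun i j => dist (y i) (y j) ^ P.toReal).CondNegSemidef := by
  intro η hη
  have hP0 : 0 < P.toReal := ENNReal.toReal_pos (zero_lt_one.trans_le Fact.out).ne' hP
  calc η ⬝ᵥ (of fun i j => dist (y i) (y j) ^ P.toReal) *ᵥ η
      = ∫ ω, η ⬝ᵥ (of fun i j => |y i ω - y j ω| ^ P.toReal) *ᵥ η ∂μ := by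
        rw [integral_dotProduct_mulVec (M := fun ω => of fun i j => |y i ω - y j ω| ^ P.toReal)
          fun i j => Lp.integrable_abs_sub_rpow hP (y i) (y j)]
        congr 2
        ext i j
        exact Lp.dist_rpow_eq_integral hP (y i) (y j)
    _ ≤ 0 := integral_nonpos fun ω =>
      condNegSemidef_abs_sub_rpow (fun i => y i ω) hP0 hP2 η hη

theorem hasNegType_Lp (μ : Measure Ω) (hP : P ≠ ∞) (hP2 : P.toReal ≤ 2) :
    HasNegType (Lp ℝ P μ) P.toReal :=
  (hasNegType_iff (ENNReal.toReal_pos (zero_lt_one.trans_le Fact.out).ne' hP).ne').mpr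
    fun _ _ y _ => condNegSemidef_dist_rpow_Lp hP hP2 y

end

/-- A metric space isometric to a subset of `L_p(μ)` (`1 ≤ p ≤ 2`) has strict
`q`-negative type for all `q ∈ [0,p)`. -/
theorem strictNegType_of_isometry_Lp {X : Type*} [MetricSpace X]
    {Ω : Type*} [MeasurableSpace Ω] (μ : Measure Ω)
    (p : ℝ) (hp1 : 1 ≤ p) (hp2 : p ≤ 2)
    [Fact (1 ≤ ENNReal.ofReal p)]
    (f : X → Lp ℝ (ENNReal.ofReal p) μ) (hf : Isometry f) :
    ∀ q : ℝ, 0 ≤ q → q < p → HasStrictNegType X q := by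
  intro q hq0 hqp
  have hp : (ENNReal.ofReal p).toReal = p := ENNReal.toReal_ofReal (by linarith)
  have hLp := hasNegType_Lp μ ENNReal.ofReal_ne_top (hp.le.trans hp2)
  rw [hp] at hLp
  exact (hf.hasNegType hLp).hasStrictNegType (by linarith) hq0 hqp
end
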